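/- arXiv:2401.15226 — 3 statements merged into one kernel-verified Lean document; each statement's English description precedes it below -/
import Mathlib

section
/- Let λ > 0 and γ ∈ ℝ. For f : (0,∞) → ℝ with ∫₀^∞ |f(r)|²(1+r²)^γ r dr < ∞ and satisfying the solvability condition ∫₀^∞ f(r) e^{-λ r} r dr = 0, the function u(r) = (1/r)∫₀^r e^{-λ(s-r)} f(s) s ds satisfies the bound ∫₀^1 |u(r)|²(1+r²)^γ r dr ≤ C ∫₀^1 |f(r)|²(1+r²)^γ r dr for a constant C depending only on λ and γ. -/
open MeasureTheory Set Filter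

/-! By Cauchy–Schwarz against the measure `s ds`,
`|∫₀^r e^{λ(r-s)} f(s) s ds|² ≤ e^{2|λ|r} r² ∫₀^r f(s)² s ds`, so `u(r)² ≤ e^{2|λ|} ∫₀^1 f² s ds`
for `0 < r ≤ 1`. On `(0,1)` the weight `(1+r²)^γ` lies between `2^{-|γ|}` and `2^{|γ|}`, so
integrating `u² (1+r²)^γ r` over `(0,1)` gives the bound with `C = e^{2|λ|} 4^{|γ|}`. -/

theorem sq_integral_mul_le_mul {α : Type*} [MeasurableSpace α] {μ : Measure α} {f g : α → ℝ}
    (hf : MemLp f 2 μ) (hg : MemLp g 2 μ) :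
    (∫ a, f a * g a ∂μ) ^ 2 ≤ (∫ a, f a ^ 2 ∂μ) * ∫ a, g a ^ 2 ∂μ := by
  have holder := integral_mul_norm_le_Lp_mul_Lq Real.HolderConjugate.two_two
    (by simpa using hf) (by simpa using hg)
  simp only [Real.norm_eq_abs, Real.rpow_two, sq_abs, ← Real.sqrt_eq_rpow] at holder
  rw [← Real.sqrt_mul (integral_nonneg fun a => sq_nonneg (f a))] at holder
  rw [← sq_abs, ← Real.le_sqrt (abs_nonneg _)
    (mul_nonneg (integral_nonneg fun a => sq_nonneg _) (integral_nonneg fun a => sq_nonneg _))]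
  calc |∫ a, f a * g a ∂μ| ≤ ∫ a, |f a * g a| ∂μ := abs_integral_le_integral_abs
    _ = ∫ a, |f a| * |g a| ∂μ := by simp only [abs_mul]
    _ ≤ _ := holder

theorem rpow_le_two_rpow_abs {x : ℝ} (γ : ℝ) (h1 : 1 ≤ x) (h2 : x ≤ 2) : x ^ γ ≤ 2 ^ |γ| :=
  (Real.rpow_le_rpow_of_exponent_le h1 (le_abs_self γ)).trans
    (Real.rpow_le_rpow (by linarith) h2 (abs_nonneg γ))

theorem one_le_two_rpow_abs_mul_rpow {x : ℝ} (γ : ℝ) (h1 : 1 ≤ x) (h2 : x ≤ 2) :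
    1 ≤ 2 ^ |γ| * x ^ γ :=
  calc 1 ≤ x ^ (|γ| + γ) := Real.one_le_rpow h1 (by linarith [neg_abs_le γ])
    _ = x ^ |γ| * x ^ γ := Real.rpow_add (by linarith) _ _
    _ ≤ 2 ^ |γ| * x ^ γ := by gcongr

theorem one_add_sq_mem_Icc {r : ℝ} (hr : r ∈ Ioo (0 : ℝ) 1) : 1 + r ^ 2 ∈ Icc (1 : ℝ) 2 :=
  ⟨by nlinarith [hr.1], by nlinarith [hr.1, hr.2]⟩

section Weighted

variable {f : ℝ → ℝ} (γ : ℝ)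

theorem sq_mul_le_two_rpow_abs_mul_weighted {r : ℝ} (hr : r ∈ Ioo (0 : ℝ) 1) :
    f r ^ 2 * r ≤ 2 ^ |γ| * (f r ^ 2 * (1 + r ^ 2) ^ γ * r) := by
  have hw := one_le_two_rpow_abs_mul_rpow γ (one_add_sq_mem_Icc hr).1 (one_add_sq_mem_Icc hr).2
  have hfr : 0 ≤ f r ^ 2 * r := mul_nonneg (sq_nonneg _) hr.1.le
  nlinarith

theorem integrableOn_sq_mul_of_weighted (hf : AEStronglyMeasurable f (volume.restrict (Ioo 0 1)))
    (hw : IntegrableOn (fun r => f r ^ 2 * (1 + r ^ 2) ^ γ * r) (Ioo 0 1)) :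
    IntegrableOn (fun r => f r ^ 2 * r) (Ioo 0 1) := by
  refine Integrable.mono' (hw.const_mul (2 ^ |γ|))
    ((hf.pow 2).mul measurable_id.aestronglyMeasurable) ?_
  refine (ae_restrict_iff' measurableSet_Ioo).mpr (Eventually.of_forall fun r hr => ?_)
  rw [Real.norm_of_nonneg (mul_nonneg (sq_nonneg _) hr.1.le)]
  exact sq_mul_le_two_rpow_abs_mul_weighted γ hr

theorem setIntegral_sq_mul_le_weighted
    (hw : IntegrableOn (fun r => f r ^ 2 * (1 + r ^ 2) ^ γ * r) (Ioo 0 1)) :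
    ∫ r in Ioo (0 : ℝ) 1, f r ^ 2 * r
      ≤ 2 ^ |γ| * ∫ r in Ioo (0 : ℝ) 1, f r ^ 2 * (1 + r ^ 2) ^ γ * r := by
  rw [← integral_const_mul]
  refine integral_mono_of_nonneg ?_ (hw.const_mul _) ?_ <;>
    refine (ae_restrict_iff' measurableSet_Ioo).mpr (Eventually.of_forall fun r hr => ?_)
  · exact mul_nonneg (sq_nonneg _) hr.1.le
  · exact sq_mul_le_two_rpow_abs_mul_weighted γ hr

end Weighted

theorem exp_neg_mul_sub_sq_le {lam r s : ℝ} (hs : s ∈ Ioo 0 r) :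
    Real.exp (-lam * (s - r)) ^ 2 ≤ Real.exp (2 * |lam| * r) := by
  rw [← Real.exp_nat_mul, Real.exp_le_exp]
  push_cast
  nlinarith [le_abs_self lam, abs_nonneg lam, hs.1, hs.2]

theorem sq_setIntegral_exp_mul_le (lam : ℝ) {f : ℝ → ℝ} {r : ℝ} (hr : 0 ≤ r)
    (hf : AEStronglyMeasurable f (volume.restrict (Ioo 0 r)))
    (hf2 : IntegrableOn (fun s => f s ^ 2 * s) (Ioo 0 r)) :
    (∫ s in Ioo 0 r, Real.exp (-lam * (s - r)) * f s * s) ^ 2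
      ≤ Real.exp (2 * |lam| * r) * r ^ 2 * ∫ s in Ioo 0 r, f s ^ 2 * s := by
  set a : ℝ → ℝ := fun s => Real.exp (-lam * (s - r)) * √s
  set b : ℝ → ℝ := fun s => f s * √s
  have hab : ∫ s in Ioo 0 r, Real.exp (-lam * (s - r)) * f s * s = ∫ s in Ioo 0 r, a s * b s :=
    setIntegral_congr_fun measurableSet_Ioo fun s hs => by
      simp only [a, b]
      rw [mul_mul_mul_comm, Real.mul_self_sqrt hs.1.le, mul_right_comm]
  have ha_sq : ∀ s ∈ Ioo 0 r, a s ^ 2 = Real.exp (-lam * (s - r)) ^ 2 * s := fun s hs => by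
    simp only [a]; rw [mul_pow, Real.sq_sqrt hs.1.le]
  have hb_sq : ∀ s ∈ Ioo 0 r, b s ^ 2 = f s ^ 2 * s := fun s hs => by
    simp only [b]; rw [mul_pow, Real.sq_sqrt hs.1.le]
  have ha_cont : Continuous a := by fun_prop
  have ha : MemLp a 2 (volume.restrict (Ioo 0 r)) :=
    (memLp_two_iff_integrable_sq ha_cont.aestronglyMeasurable).mpr
      (((ha_cont.pow 2).integrableOn_Icc).mono_set Ioo_subset_Icc_self)
  have hb : MemLp b 2 (volume.restrict (Ioo 0 r)) :=
    (memLp_two_iff_integrable_sq (hf.mul Real.continuous_sqrt.aestronglyMeasurable)).mpr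
      (hf2.congr_fun (fun s hs => (hb_sq s hs).symm) measurableSet_Ioo)
  have ha_int : ∫ s in Ioo 0 r, a s ^ 2 ≤ Real.exp (2 * |lam| * r) * r * r := by
    have h := norm_setIntegral_le_of_norm_le_const (f := fun s => a s ^ 2)
      (C := Real.exp (2 * |lam| * r) * r) (measure_Ioo_lt_top (μ := volume)) fun s hs => by
        rw [Real.norm_of_nonneg (sq_nonneg _), ha_sq s hs]
        exact mul_le_mul (exp_neg_mul_sub_sq_le hs) hs.2.le hs.1.le (Real.exp_pos _).le
    rw [Real.volume_real_Ioo_of_le hr, sub_zero] at h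
    exact (le_abs_self _).trans h
  have hb_int : ∫ s in Ioo 0 r, b s ^ 2 = ∫ s in Ioo 0 r, f s ^ 2 * s :=
    setIntegral_congr_fun measurableSet_Ioo hb_sq
  rw [hab, ← hb_int]
  calc (∫ s in Ioo 0 r, a s * b s) ^ 2
      ≤ (∫ s in Ioo 0 r, a s ^ 2) * ∫ s in Ioo 0 r, b s ^ 2 := sq_integral_mul_le_mul ha hb
    _ ≤ Real.exp (2 * |lam| * r) * r ^ 2 * ∫ s in Ioo 0 r, b s ^ 2 := by
      rw [sq, ← mul_assoc]
      exact mul_le_mul_of_nonneg_right ha_int (integral_nonneg fun s => sq_nonneg _)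

noncomputable def radialSolution (lam : ℝ) (f : ℝ → ℝ) (r : ℝ) : ℝ :=
  (1 / r) * ∫ s in Ioo 0 r, Real.exp (-lam * (s - r)) * f s * s

section RadialSolution

variable (lam : ℝ) {f : ℝ → ℝ}

theorem sq_radialSolution_le (hf : AEStronglyMeasurable f (volume.restrict (Ioo 0 1)))
    (hf2 : IntegrableOn (fun s => f s ^ 2 * s) (Ioo 0 1)) {r : ℝ} (hr : r ∈ Ioc (0 : ℝ) 1) :
    radialSolution lam f r ^ 2 ≤ Real.exp (2 * |lam|) * ∫ s in Ioo (0 : ℝ) 1, f s ^ 2 * s := by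
  have hsub : Ioo 0 r ⊆ Ioo (0 : ℝ) 1 := Ioo_subset_Ioo_right hr.2
  have hJ := sq_setIntegral_exp_mul_le lam hr.1.le
    (hf.mono_measure (Measure.restrict_mono hsub le_rfl)) (hf2.mono_set hsub)
  have hmono : ∫ s in Ioo 0 r, f s ^ 2 * s ≤ ∫ s in Ioo (0 : ℝ) 1, f s ^ 2 * s :=
    setIntegral_mono_set hf2 ((ae_restrict_iff' measurableSet_Ioo).mpr
      (Eventually.of_forall fun s hs => mul_nonneg (sq_nonneg _) hs.1.le)) hsub.eventuallyLE
  have hexp : Real.exp (2 * |lam| * r) ≤ Real.exp (2 * |lam|) := by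
    rw [Real.exp_le_exp]
    nlinarith [abs_nonneg lam, hr.2]
  have hIr : 0 ≤ ∫ s in Ioo 0 r, f s ^ 2 * s :=
    setIntegral_nonneg measurableSet_Ioo fun s hs => mul_nonneg (sq_nonneg _) hs.1.le
  rw [radialSolution, mul_pow, one_div, inv_pow, inv_mul_le_iff₀ (by nlinarith [hr.1])]
  calc (∫ s in Ioo 0 r, Real.exp (-lam * (s - r)) * f s * s) ^ 2
      ≤ r ^ 2 * (Real.exp (2 * |lam| * r) * ∫ s in Ioo 0 r, f s ^ 2 * s) := by linarith
    _ ≤ r ^ 2 * (Real.exp (2 * |lam|) * ∫ s in Ioo (0 : ℝ) 1, f s ^ 2 * s) := by gcongr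

theorem setIntegral_sq_radialSolution_mul_weight_le
    (hf : AEStronglyMeasurable f (volume.restrict (Ioo 0 1)))
    (hf2 : IntegrableOn (fun s => f s ^ 2 * s) (Ioo 0 1)) (γ : ℝ) :
    ∫ r in Ioo (0 : ℝ) 1, radialSolution lam f r ^ 2 * (1 + r ^ 2) ^ γ * r
      ≤ Real.exp (2 * |lam|) * 2 ^ |γ| * ∫ s in Ioo (0 : ℝ) 1, f s ^ 2 * s := by
  have hI : 0 ≤ ∫ s in Ioo (0 : ℝ) 1, f s ^ 2 * s :=
    setIntegral_nonneg measurableSet_Ioo fun s hs => mul_nonneg (sq_nonneg _) hs.1.le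
  have h := norm_setIntegral_le_of_norm_le_const
    (f := fun r => radialSolution lam f r ^ 2 * (1 + r ^ 2) ^ γ * r)
    (C := Real.exp (2 * |lam|) * 2 ^ |γ| * ∫ s in Ioo (0 : ℝ) 1, f s ^ 2 * s)
    (measure_Ioo_lt_top (μ := volume)) fun r hr => by
      have hw := rpow_le_two_rpow_abs γ (one_add_sq_mem_Icc hr).1 (one_add_sq_mem_Icc hr).2
      rw [Real.norm_of_nonneg (by have := hr.1; positivity), mul_right_comm _ (2 ^ |γ|)]
      calc radialSolution lam f r ^ 2 * (1 + r ^ 2) ^ γ * r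
          ≤ (Real.exp (2 * |lam|) * ∫ s in Ioo (0 : ℝ) 1, f s ^ 2 * s) * 2 ^ |γ| * 1 := by
            gcongr
            exacts [hr.1.le, sq_radialSolution_le lam hf hf2 (Ioo_subset_Ioc_self hr), hr.2.le]
        _ = _ := mul_one _
  rw [Real.volume_real_Ioo_of_le zero_le_one, sub_zero, mul_one] at h
  exact (le_abs_self _).trans h

end RadialSolution

theorem stmt3_general (lam γ : ℝ) :
    ∃ C : ℝ, 0 < C ∧
      ∀ f : ℝ → ℝ, Measurable f →
        IntegrableOn (fun r => (f r) ^ 2 * (1 + r ^ 2) ^ γ * r) (Ioi 0) →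
        IntegrableOn (fun r => f r * Real.exp (-lam * r) * r) (Ioi 0) →
        (∫ r in Ioi (0:ℝ), f r * Real.exp (-lam * r) * r) = 0 →
        (∫ r in Ioo (0:ℝ) 1,
            ((1 / r) * ∫ s in Ioo (0:ℝ) r, Real.exp (-lam * (s - r)) * f s * s) ^ 2
              * (1 + r ^ 2) ^ γ * r)
          ≤ C * ∫ r in Ioo (0:ℝ) 1, (f r) ^ 2 * (1 + r ^ 2) ^ γ * r := by
  refine ⟨Real.exp (2 * |lam|) * 2 ^ |γ| * 2 ^ |γ|, by positivity, ?_⟩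
  intro f hf hw _ _
  have hw₁ : IntegrableOn (fun r => f r ^ 2 * (1 + r ^ 2) ^ γ * r) (Ioo 0 1) :=
    hw.mono_set Ioo_subset_Ioi_self
  have hf₁ := hf.aestronglyMeasurable (μ := volume.restrict (Ioo 0 1))
  calc ∫ r in Ioo (0 : ℝ) 1, radialSolution lam f r ^ 2 * (1 + r ^ 2) ^ γ * r
      ≤ Real.exp (2 * |lam|) * 2 ^ |γ| * ∫ s in Ioo (0 : ℝ) 1, f s ^ 2 * s :=
        setIntegral_sq_radialSolution_mul_weight_le lam hf₁
          (integrableOn_sq_mul_of_weighted γ hf₁ hw₁) γ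
    _ ≤ Real.exp (2 * |lam|) * 2 ^ |γ|
          * (2 ^ |γ| * ∫ r in Ioo (0 : ℝ) 1, f r ^ 2 * (1 + r ^ 2) ^ γ * r) := by
        gcongr
        exact setIntegral_sq_mul_le_weighted γ hw₁
    _ = _ := by ring

/-- near-origin bound for the inverse of `L u = u' + u/r - λu` on the range
characterized by orthogonality to `e^{-λ r}`: with
`u(r) = (1/r)∫₀^r e^{-λ(s-r)} f(s) s ds`, we have
`∫₀^1 u² (1+r²)^γ r dr ≤ C ∫₀^1 f² (1+r²)^γ r dr` with `C = C(λ,γ)`. -/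
theorem stmt3 (lam γ : ℝ) (hlam : 0 < lam) :
    ∃ C : ℝ, 0 < C ∧
      ∀ f : ℝ → ℝ, Measurable f →
        IntegrableOn (fun r => (f r) ^ 2 * (1 + r ^ 2) ^ γ * r) (Ioi 0) →
        IntegrableOn (fun r => f r * Real.exp (-lam * r) * r) (Ioi 0) →
        (∫ r in Ioi (0:ℝ), f r * Real.exp (-lam * r) * r) = 0 →
        (∫ r in Ioo (0:ℝ) 1,
            ((1 / r) * ∫ s in Ioo (0:ℝ) r, Real.exp (-lam * (s - r)) * f s * s) ^ 2
              * (1 + r ^ 2) ^ γ * r)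
          ≤ C * ∫ r in Ioo (0:ℝ) 1, (f r) ^ 2 * (1 + r ^ 2) ^ γ * r :=
  stmt3_general lam γ
end

section
/- Let λ > 0 and γ ∈ ℝ. Define for f ∈ L²((1,∞), (1+r²)^γ r dr) the function u(r) = (1/r)∫_∞^r e^{-λ(s-r)} f(s) s ds = -(1/r)∫_r^∞ e^{-λ(s-r)} f(s) s ds. Then there is a constant C₁ = C₁(λ,γ) such that (∫₁^∞ |u(r)|² (1+r²)^γ r dr)^{1/2} ≤ C₁ (∫₁^∞ |f(r)|² (1+r²)^γ r dr)^{1/2}. -/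
open MeasureTheory Set Filter Real
open scoped ENNReal

/-! For `r ≥ 1` and `s = r + z ≥ r` one has `1 + (r + z)² ≤ (1 + r²)(1 + z)²`, hence
`s (1 + s²)^(-γ) ≤ r (1 + r²)^(-γ) (1 + z)^(2|γ|+1)`. Cauchy–Schwarz against the measure
`e^{-λ(s-r)} s (1 + s²)^(-γ) ds` on `(r, ∞)` therefore gives
`|u(r)|² (1 + r²)^γ r ≤ K ∫_r^∞ e^{-λ(s-r)} f(s)² (1 + s²)^γ s ds` with
`K = ∫₀^∞ e^{-λz} (1 + z)^(2|γ|+1) dz`. Integrating in `r` and exchanging the integrals,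
`∫₁^∞ |u|² (1 + r²)^γ r dr ≤ (K / λ) ∫₁^∞ f² (1 + r²)^γ r dr`. -/

theorem one_add_sq_add_le_mul {r z : ℝ} (hr : 0 ≤ r) (hz : 0 ≤ z) :
    1 + (r + z) ^ 2 ≤ (1 + r ^ 2) * (1 + z) ^ 2 := by
  nlinarith [sq_nonneg (r - 1), mul_nonneg hr hz, mul_nonneg (mul_nonneg hr hr) hz]

theorem one_add_sq_add_rpow_le_mul {r z : ℝ} (hr : 0 ≤ r) (hz : 0 ≤ z) (η : ℝ) :
    (1 + (r + z) ^ 2) ^ η ≤ (1 + r ^ 2) ^ η * (1 + z) ^ (2 * |η|) := by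
  rcases le_total η 0 with hη | hη
  · calc (1 + (r + z) ^ 2) ^ η ≤ (1 + r ^ 2) ^ η :=
          rpow_le_rpow_of_nonpos (by positivity) (by nlinarith) hη
      _ ≤ (1 + r ^ 2) ^ η * (1 + z) ^ (2 * |η|) :=
          le_mul_of_one_le_right (by positivity) (one_le_rpow (by linarith) (by positivity))
  · calc (1 + (r + z) ^ 2) ^ η ≤ ((1 + r ^ 2) * (1 + z) ^ 2) ^ η :=
          rpow_le_rpow (by positivity) (one_add_sq_add_le_mul hr hz) hη
      _ = (1 + r ^ 2) ^ η * (1 + z) ^ (2 * |η|) := by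
          rw [mul_rpow (by positivity) (by positivity), abs_of_nonneg hη,
            ← rpow_natCast_mul (by linarith)]
          norm_num

theorem mul_one_add_sq_rpow_neg_le {r z : ℝ} (hr : 1 ≤ r) (hz : 0 ≤ z) (γ : ℝ) :
    (r + z) * (1 + (r + z) ^ 2) ^ (-γ) ≤ r * (1 + r ^ 2) ^ (-γ) * (1 + z) ^ (2 * |γ| + 1) := by
  calc (r + z) * (1 + (r + z) ^ 2) ^ (-γ)
      ≤ (r * (1 + z)) * ((1 + r ^ 2) ^ (-γ) * (1 + z) ^ (2 * |-γ|)) :=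
        mul_le_mul (by nlinarith) (one_add_sq_add_rpow_le_mul (by linarith) hz _) (by positivity)
          (by positivity)
    _ = r * (1 + r ^ 2) ^ (-γ) * (1 + z) ^ (2 * |γ| + 1) := by
        rw [abs_neg, rpow_add_one (by linarith)]
        ring

theorem one_add_rpow_isLittleO_exp (p : ℝ) {b : ℝ} (hb : 0 < b) :
    (fun z : ℝ => (1 + z) ^ p) =o[atTop] fun z => exp (b * z) := by
  have h := (isLittleO_rpow_exp_pos_mul_atTop p hb).comp_tendsto
    (tendsto_atTop_add_const_left _ 1 tendsto_id)
  refine h.trans_isBigO (Asymptotics.isBigO_of_le' (c := exp b) _ fun z => ?_)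
  simp [mul_add, exp_add]

theorem integrableOn_exp_neg_mul_one_add_rpow {b : ℝ} (hb : 0 < b) (p : ℝ) :
    IntegrableOn (fun z => exp (-b * z) * (1 + z) ^ p) (Ioi 0) := by
  refine integrable_of_isBigO_exp_neg (half_pos hb) ?_ ?_
  · exact ContinuousOn.mul (by fun_prop)
      (ContinuousOn.rpow_const (by fun_prop) fun z hz => Or.inl (by linarith [mem_Ici.1 hz]))
  · have h := (Asymptotics.isBigO_refl (fun z => exp (-b * z)) atTop).mul
      (one_add_rpow_isLittleO_exp p (half_pos hb)).isBigO
    have hexp (z : ℝ) : exp (-b * z) * exp (b / 2 * z) = exp (-(b / 2) * z) := by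
      rw [← exp_add]; ring_nf
    simpa only [hexp] using h

theorem ENNReal.lintegral_mul_sq_le {α : Type*} [MeasurableSpace α] {μ : Measure α}
    {a b : α → ℝ≥0∞} (ha : AEMeasurable a μ) (hb : AEMeasurable b μ) :
    (∫⁻ x, a x * b x ∂μ) ^ 2 ≤ (∫⁻ x, a x ∂μ) * ∫⁻ x, a x * b x ^ 2 ∂μ := by
  have sqrt_sq (y : ℝ≥0∞) : (y ^ 2) ^ (2⁻¹ : ℝ) = y := by
    simpa using ENNReal.pow_rpow_inv_natCast two_ne_zero y
  have sq_sqrt (y : ℝ≥0∞) : (y ^ (2⁻¹ : ℝ)) ^ 2 = y := by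
    simpa using ENNReal.rpow_inv_natCast_pow two_ne_zero y
  have hsplit (x : α) : a x * b x = a x ^ (2⁻¹ : ℝ) * (a x * b x ^ 2) ^ (2⁻¹ : ℝ) := by
    rw [ENNReal.mul_rpow_of_nonneg _ _ (by norm_num), ← mul_assoc,
      ← ENNReal.rpow_add_of_nonneg _ _ (by norm_num) (by norm_num), sqrt_sq]
    norm_num
  have h := ENNReal.lintegral_mul_norm_pow_le (g := fun x => a x * b x ^ 2) ha
    (ha.mul (hb.pow_const 2)) (p := 2⁻¹) (q := 2⁻¹) (by norm_num) (by norm_num) (by norm_num)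
  simp_rw [← hsplit] at h
  calc (∫⁻ x, a x * b x ∂μ) ^ 2
      ≤ ((∫⁻ x, a x ∂μ) ^ (2⁻¹ : ℝ) * (∫⁻ x, a x * b x ^ 2 ∂μ) ^ (2⁻¹ : ℝ)) ^ 2 := by
        gcongr
    _ = _ := by rw [mul_pow, sq_sqrt, sq_sqrt]

theorem setLIntegral_Ioi_comp_sub (h : ℝ → ℝ≥0∞) (r : ℝ) :
    ∫⁻ s in Ioi r, h (s - r) = ∫⁻ z in Ioi 0, h z := by
  calc ∫⁻ s in Ioi r, h (s - r) = ∫⁻ s, (Ioi 0).indicator h (s - r) := by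
        rw [← lintegral_indicator measurableSet_Ioi]
        congr 1 with s
        simp [indicator]
    _ = ∫⁻ z in Ioi 0, h z := by
        rw [lintegral_sub_right_eq_self, lintegral_indicator measurableSet_Ioi]

theorem lintegral_Ioi_lintegral_Ioi_sub_mul_le {E F : ℝ → ℝ≥0∞} (hE : Measurable E)
    (hF : Measurable F) (a : ℝ) :
    ∫⁻ r in Ioi a, ∫⁻ s in Ioi r, E (s - r) * F s ≤
      (∫⁻ z in Ioi 0, E z) * ∫⁻ s in Ioi a, F s := by
  set E' := (Ioi (0:ℝ)).indicator E
  set F' := (Ioi a).indicator F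
  have hE' : Measurable E' := hE.indicator measurableSet_Ioi
  have hF' : Measurable F' := hF.indicator measurableSet_Ioi
  have hinner :
      ∀ r ∈ Ioi a, ∫⁻ s in Ioi r, E (s - r) * F s = ∫⁻ s, E' (s - r) * F' s := by
    intro r hr
    rw [← lintegral_indicator measurableSet_Ioi]
    congr 1 with s
    by_cases hs : r < s
    · simp [E', F', indicator, hs, lt_trans hr hs]
    · simp [E', F', indicator, hs]
  calc ∫⁻ r in Ioi a, ∫⁻ s in Ioi r, E (s - r) * F s
      = ∫⁻ r in Ioi a, ∫⁻ s, E' (s - r) * F' s :=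
        setLIntegral_congr_fun measurableSet_Ioi hinner
    _ = ∫⁻ s, (∫⁻ r in Ioi a, E' (s - r)) * F' s := by
      rw [lintegral_lintegral_swap
        ((hE'.comp (measurable_snd.sub measurable_fst)).mul (hF'.comp measurable_snd)).aemeasurable]
      congr 1 with s
      exact lintegral_mul_const _ (hE'.comp (measurable_const.sub measurable_id))
    _ ≤ ∫⁻ s, (∫⁻ r, E' (s - r)) * F' s := by
      gcongr with s
      exact Measure.restrict_le_self
    _ = (∫⁻ z in Ioi 0, E z) * ∫⁻ s in Ioi a, F s := by
      simp_rw [lintegral_sub_left_eq_self]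
      rw [lintegral_const_mul _ hF', lintegral_indicator measurableSet_Ioi,
        lintegral_indicator measurableSet_Ioi]

noncomputable def farField (lam : ℝ) (f : ℝ → ℝ) (r : ℝ) : ℝ :=
  -(1 / r) * ∫ s in Ioi r, exp (-lam * (s - r)) * f s * s

theorem ofReal_farField_sq_mul_le (lam γ : ℝ) {f : ℝ → ℝ} (hf : Measurable f) {r : ℝ}
    (hr : 1 ≤ r) :
    ENNReal.ofReal (farField lam f r ^ 2 * (1 + r ^ 2) ^ γ * r) ≤
      (∫⁻ z in Ioi 0, ENNReal.ofReal (exp (-lam * z) * (1 + z) ^ (2 * |γ| + 1))) *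
        ∫⁻ s in Ioi r, ENNReal.ofReal (exp (-lam * (s - r))) *
          ENNReal.ofReal (f s ^ 2 * (1 + s ^ 2) ^ γ * s) := by
  set K := ∫⁻ z in Ioi 0, ENNReal.ofReal (exp (-lam * z) * (1 + z) ^ (2 * |γ| + 1))
  set v := ∫ s in Ioi r, exp (-lam * (s - r)) * f s * s with hv_def
  set a : ℝ → ℝ≥0∞ := fun s =>
    ENNReal.ofReal (exp (-lam * (s - r)) * (s * (1 + s ^ 2) ^ (-γ)))
  set b : ℝ → ℝ≥0∞ := fun s => ENNReal.ofReal (|f s| * (1 + s ^ 2) ^ γ)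
  have hr0 : 0 < r := by linarith
  have hab : ∀ s ∈ Ioi r, a s * b s = ‖exp (-lam * (s - r)) * f s * s‖ₑ := by
    intro s hs
    have hs0 : 0 < s := hr0.trans hs
    rw [enorm_eq_ofReal_abs, ← ENNReal.ofReal_mul (by positivity), rpow_neg (by positivity),
      abs_mul, abs_mul, abs_of_pos (exp_pos _), abs_of_pos hs0]
    congr 1
    field_simp
  have habb : ∀ s ∈ Ioi r, a s * b s ^ 2 =
      ENNReal.ofReal (exp (-lam * (s - r))) * ENNReal.ofReal (f s ^ 2 * (1 + s ^ 2) ^ γ * s) := by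
    intro s hs
    have hs0 : 0 < s := hr0.trans hs
    rw [← ENNReal.ofReal_pow (by positivity), ← ENNReal.ofReal_mul (by positivity),
      ← ENNReal.ofReal_mul (by positivity), rpow_neg (by positivity), mul_pow, sq_abs]
    congr 1
    field_simp
  have ha : ∫⁻ s in Ioi r, a s ≤ ENNReal.ofReal (r * (1 + r ^ 2) ^ (-γ)) * K := by
    calc ∫⁻ s in Ioi r, a s
        ≤ ∫⁻ s in Ioi r, ENNReal.ofReal (r * (1 + r ^ 2) ^ (-γ)) *
            ENNReal.ofReal (exp (-lam * (s - r)) * (1 + (s - r)) ^ (2 * |γ| + 1)) := by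
          refine setLIntegral_mono' measurableSet_Ioi fun s hs => ?_
          rw [← ENNReal.ofReal_mul (by positivity)]
          refine ENNReal.ofReal_le_ofReal ?_
          have h := mul_one_add_sq_rpow_neg_le hr (sub_nonneg.2 (le_of_lt hs)) γ
          rw [add_sub_cancel] at h
          calc exp (-lam * (s - r)) * (s * (1 + s ^ 2) ^ (-γ))
              ≤ exp (-lam * (s - r)) *
                  (r * (1 + r ^ 2) ^ (-γ) * (1 + (s - r)) ^ (2 * |γ| + 1)) := by gcongr
            _ = _ := by ring
      _ = ENNReal.ofReal (r * (1 + r ^ 2) ^ (-γ)) * K := by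
          rw [lintegral_const_mul' _ _ ENNReal.ofReal_ne_top, setLIntegral_Ioi_comp_sub
            (fun z => ENNReal.ofReal (exp (-lam * z) * (1 + z) ^ (2 * |γ| + 1)))]
  have hv : ‖v‖ₑ ≤ ∫⁻ s in Ioi r, a s * b s :=
    (enorm_integral_le_lintegral_enorm _).trans_eq
    (setLIntegral_congr_fun measurableSet_Ioi hab).symm
  have hCS := ENNReal.lintegral_mul_sq_le (μ := volume.restrict (Ioi r)) (a := a) (b := b)
    (by fun_prop) (by fun_prop)
  have hcancel :
      ENNReal.ofReal ((1 + r ^ 2) ^ γ / r) * ENNReal.ofReal (r * (1 + r ^ 2) ^ (-γ)) = 1 := by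
    rw [← ENNReal.ofReal_mul (by positivity), rpow_neg (by positivity), ← ENNReal.ofReal_one]
    congr 1
    field_simp
  calc ENNReal.ofReal (farField lam f r ^ 2 * (1 + r ^ 2) ^ γ * r)
      = ENNReal.ofReal ((1 + r ^ 2) ^ γ / r) * ‖v‖ₑ ^ 2 := by
        rw [farField, ← hv_def, enorm_eq_ofReal_abs, ← ENNReal.ofReal_pow (abs_nonneg _),
          ← ENNReal.ofReal_mul (by positivity), sq_abs]
        congr 1
        field_simp
    _ ≤ ENNReal.ofReal ((1 + r ^ 2) ^ γ / r) *
          ((ENNReal.ofReal (r * (1 + r ^ 2) ^ (-γ)) * K) * ∫⁻ s in Ioi r, a s * b s ^ 2) := by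
        gcongr
        exact (pow_le_pow_left' hv 2).trans (hCS.trans (by gcongr))
    _ = K * ∫⁻ s in Ioi r, ENNReal.ofReal (exp (-lam * (s - r))) *
          ENNReal.ofReal (f s ^ 2 * (1 + s ^ 2) ^ γ * s) := by
        rw [setLIntegral_congr_fun measurableSet_Ioi habb, ← mul_assoc, ← mul_assoc, hcancel,
          one_mul]

theorem lintegral_farField_sq_mul_le {lam : ℝ} (hlam : 0 < lam) (γ : ℝ) {f : ℝ → ℝ}
    (hf : Measurable f) :
    ∫⁻ r in Ioi 1, ENNReal.ofReal (farField lam f r ^ 2 * (1 + r ^ 2) ^ γ * r) ≤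
      (∫⁻ z in Ioi 0, ENNReal.ofReal (exp (-lam * z) * (1 + z) ^ (2 * |γ| + 1))) *
        (∫⁻ z in Ioi 0, ENNReal.ofReal (exp (-lam * z))) *
          ∫⁻ s in Ioi 1, ENNReal.ofReal (f s ^ 2 * (1 + s ^ 2) ^ γ * s) := by
  set K := ∫⁻ z in Ioi 0, ENNReal.ofReal (exp (-lam * z) * (1 + z) ^ (2 * |γ| + 1))
  calc ∫⁻ r in Ioi 1, ENNReal.ofReal (farField lam f r ^ 2 * (1 + r ^ 2) ^ γ * r)
      ≤ ∫⁻ r in Ioi 1, K * ∫⁻ s in Ioi r, ENNReal.ofReal (exp (-lam * (s - r))) *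
          ENNReal.ofReal (f s ^ 2 * (1 + s ^ 2) ^ γ * s) :=
        setLIntegral_mono' measurableSet_Ioi fun r hr =>
          ofReal_farField_sq_mul_le lam γ hf (le_of_lt hr)
    _ = K * ∫⁻ r in Ioi 1, ∫⁻ s in Ioi r, ENNReal.ofReal (exp (-lam * (s - r))) *
          ENNReal.ofReal (f s ^ 2 * (1 + s ^ 2) ^ γ * s) :=
        lintegral_const_mul' _ _
          (integrableOn_exp_neg_mul_one_add_rpow hlam _).setLIntegral_lt_top.ne
    _ ≤ _ := by
        rw [mul_assoc]
        gcongr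
        exact lintegral_Ioi_lintegral_Ioi_sub_mul_le (by fun_prop) (by fun_prop) 1

theorem integral_le_toReal_mul_integral_of_lintegral_le {α : Type*} [MeasurableSpace α]
    {μ : Measure α} {G F : α → ℝ} {C : ℝ≥0∞} (hC : C ≠ ∞) (hG : 0 ≤ᵐ[μ] G)
    (hF : Integrable F μ) (hF0 : 0 ≤ᵐ[μ] F)
    (h : ∫⁻ x, ENNReal.ofReal (G x) ∂μ ≤ C * ∫⁻ x, ENNReal.ofReal (F x) ∂μ) :
    ∫ x, G x ∂μ ≤ C.toReal * ∫ x, F x ∂μ := by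
  have hRHS : 0 ≤ C.toReal * ∫ x, F x ∂μ :=
    mul_nonneg ENNReal.toReal_nonneg (integral_nonneg_of_ae hF0)
  -- A non-integrable `G` has integral `0`, so no measurability of `G` is needed.
  by_cases hGi : Integrable G μ
  · rw [← ENNReal.ofReal_le_ofReal_iff hRHS, ofReal_integral_eq_lintegral_ofReal hGi hG,
      ENNReal.ofReal_mul ENNReal.toReal_nonneg, ENNReal.ofReal_toReal hC,
      ofReal_integral_eq_lintegral_ofReal hF hF0]
    exact h
  · rw [integral_undef hGi]
    exact hRHS

/-- far-field bound: with `u(r) = -(1/r)∫_r^∞ e^{-λ(s-r)} f(s) s ds`,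
`(∫₁^∞ u² (1+r²)^γ r dr)^{1/2} ≤ C₁ (∫₁^∞ f² (1+r²)^γ r dr)^{1/2}` with `C₁ = C₁(λ,γ)`. -/
theorem stmt4 (lam γ : ℝ) (hlam : 0 < lam) :
    ∃ C₁ : ℝ, 0 < C₁ ∧
      ∀ f : ℝ → ℝ, Measurable f →
        IntegrableOn (fun r => (f r) ^ 2 * (1 + r ^ 2) ^ γ * r) (Ioi 1) →
        Real.sqrt (∫ r in Ioi (1:ℝ),
            (-(1 / r) * ∫ s in Ioi r, Real.exp (-lam * (s - r)) * f s * s) ^ 2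
              * (1 + r ^ 2) ^ γ * r)
          ≤ C₁ * Real.sqrt (∫ r in Ioi (1:ℝ), (f r) ^ 2 * (1 + r ^ 2) ^ γ * r) := by
  set K := ∫⁻ z in Ioi 0, ENNReal.ofReal (exp (-lam * z) * (1 + z) ^ (2 * |γ| + 1))
  set L := ∫⁻ z in Ioi 0, ENNReal.ofReal (exp (-lam * z))
  have hK : K ≠ ∞ := (integrableOn_exp_neg_mul_one_add_rpow hlam _).setLIntegral_lt_top.ne
  have hL : L ≠ ∞ := (exp_neg_integrableOn_Ioi 0 hlam).setLIntegral_lt_top.ne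
  refine ⟨√(K * L).toReal + 1, by positivity, fun f hf hfi => ?_⟩
  have hweighted (g : ℝ → ℝ) :
      0 ≤ᵐ[volume.restrict (Ioi 1)] fun r => g r ^ 2 * (1 + r ^ 2) ^ γ * r :=
    ae_restrict_of_forall_mem measurableSet_Ioi fun r (hr : 1 < r) => by
      have : 0 < r := one_pos.trans hr
      positivity
  have hint := integral_le_toReal_mul_integral_of_lintegral_le (ENNReal.mul_ne_top hK hL)
    (hweighted _) hfi (hweighted f) (lintegral_farField_sq_mul_le hlam γ hf)
  calc √(∫ r in Ioi (1:ℝ), farField lam f r ^ 2 * (1 + r ^ 2) ^ γ * r)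
      ≤ √(K * L).toReal * √(∫ r in Ioi (1:ℝ), f r ^ 2 * (1 + r ^ 2) ^ γ * r) := by
        rw [← sqrt_mul ENNReal.toReal_nonneg]
        exact sqrt_le_sqrt hint
    _ ≤ (√(K * L).toReal + 1) * √(∫ r in Ioi (1:ℝ), f r ^ 2 * (1 + r ^ 2) ^ γ * r) := by
        gcongr
        linarith
end

section
/- Let β < 0, κ > 0, and let φ₀ ∈ C¹([0,∞)) satisfy φ₀(0) = c₀ ∈ ℝ and φ₀'(r) → κ as r → ∞. Then ∫₀^∞ (d/dS)(1/S) · e^{2βφ₀(S)} S dS + ∫₀^∞ (1/S)(1/S + 2βφ₀'(S)) e^{2βφ₀(S)} S dS = -e^{2βφ₀(0)} ≠ 0; equivalently, the pairing ⟨L_φ(1/S), e^{2βφ₀}⟩ of the image of 1/S under L_φ u = u' + u/S + 2βφ₀'u with the adjoint-kernel element e^{2βφ₀} equals -e^{2βφ₀(0)} and is nonzero. -/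
open MeasureTheory Set Filter Topology

/-
The integrand collapses to `2βφ₀' e^{2βφ₀} = (e^{2βφ₀})'`: the terms `-1/S²` and `1/S²` cancel, and
the weight `S` absorbs the remaining `1/S`. Since `φ₀' → κ > 0`, `φ₀` grows at least linearly, so
`e^{2βφ₀} → 0` with a derivative of eventually constant sign, which makes the derivative integrable.
The fundamental theorem of calculus on `(0, ∞)` then gives `0 - e^{2βφ₀(0)}`.
-/

theorem tendsto_atTop_of_hasDerivAt_of_tendsto_pos {f f' : ℝ → ℝ} {κ : ℝ} (hκ : 0 < κ)
    (hf : ∀ᶠ x in atTop, HasDerivAt f (f' x) x) (hf' : Tendsto f' atTop (𝓝 κ)) :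
    Tendsto f atTop atTop := by
  obtain ⟨b, hb⟩ := eventually_atTop.1
    (hf.and (hf'.eventually (eventually_ge_nhds (half_lt_self hκ))))
  have hlinear : ∀ x, b < x → f b + κ / 2 * (x - b) ≤ f x := by
    intro x hbx
    obtain ⟨c, hc, hslope⟩ := exists_hasDerivAt_eq_slope f f' hbx
      (HasDerivAt.continuousOn fun y hy => (hb y hy.1).1) (fun y hy => (hb y hy.1.le).1)
    have := (le_div_iff₀ (sub_pos.2 hbx)).1 (hslope ▸ (hb c hc.1.le).2)
    linarith
  refine tendsto_atTop_mono' atTop ((eventually_gt_atTop b).mono hlinear) ?_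
  exact tendsto_atTop_add_const_left _ _
    ((tendsto_atTop_add_const_right _ _ tendsto_id).const_mul_atTop (half_pos hκ))

theorem integrableOn_Ioi_deriv_of_eventually_nonpos {g g' : ℝ → ℝ} {a l : ℝ}
    (hderiv : ∀ x ∈ Ioi a, HasDerivAt g (g' x) x) (hg' : ContinuousOn g' (Ici a))
    (hnonpos : ∀ᶠ x in atTop, g' x ≤ 0) (hg : Tendsto g atTop (𝓝 l)) :
    IntegrableOn g' (Ioi a) := by
  obtain ⟨b, hb⟩ := ((eventually_gt_atTop a).and hnonpos).exists_forall_of_atTop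
  have hab : a < b := (hb b le_rfl).1
  rw [← Ioc_union_Ioi_eq_Ioi hab.le]
  refine IntegrableOn.union ?_ ?_
  · exact ((hg'.mono Icc_subset_Ici_self).integrableOn_compact isCompact_Icc).mono_set
      Ioc_subset_Icc_self
  · exact integrableOn_Ioi_deriv_of_nonpos (hderiv b hab).continuousAt.continuousWithinAt
      (fun x hx => hderiv x (hab.trans hx)) (fun x hx => (hb x hx.le).2) hg

theorem stmt17_general (β κ : ℝ) (hβ : β < 0) (hκ : 0 < κ)
    (φ₀ φ₀' : ℝ → ℝ)
    (hderiv : ∀ S ∈ Ioi (0:ℝ), HasDerivAt φ₀ (φ₀' S) S)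
    (hφcont : ContinuousOn φ₀ (Ici 0))
    (hφ'cont : ContinuousOn φ₀' (Ici 0))
    (hlim : Tendsto φ₀' atTop (nhds κ)) :
    (∫ S in Ioi (0:ℝ),
        ((-(1 / S ^ 2)) + (1 / S) * (1 / S + 2 * β * φ₀' S)) * Real.exp (2 * β * φ₀ S) * S)
      = -Real.exp (2 * β * φ₀ 0) ∧
    -Real.exp (2 * β * φ₀ 0) ≠ 0 := by
  set g : ℝ → ℝ := fun S => Real.exp (2 * β * φ₀ S)
  set g' : ℝ → ℝ := fun S => g S * (2 * β * φ₀' S)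
  have hg_cont : ContinuousOn g (Ici 0) := (hφcont.const_smul (2 * β)).rexp
  have hg_deriv : ∀ S ∈ Ioi (0:ℝ), HasDerivAt g (g' S) S := fun S hS =>
    ((hderiv S hS).const_mul (2 * β)).exp
  have hφ_top : Tendsto φ₀ atTop atTop :=
    tendsto_atTop_of_hasDerivAt_of_tendsto_pos hκ
      ((eventually_gt_atTop 0).mono hderiv) hlim
  have hg_lim : Tendsto g atTop (𝓝 0) :=
    Real.tendsto_exp_atBot.comp (hφ_top.const_mul_atTop_of_neg (by linarith))
  have hg'_nonpos : ∀ᶠ S in atTop, g' S ≤ 0 := by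
    filter_upwards [hlim.eventually (eventually_gt_nhds hκ)] with S hS
    exact mul_nonpos_of_nonneg_of_nonpos (Real.exp_pos _).le (by nlinarith)
  have hg'_int : IntegrableOn g' (Ioi 0) :=
    integrableOn_Ioi_deriv_of_eventually_nonpos hg_deriv
      (hg_cont.mul (continuousOn_const.mul hφ'cont)) hg'_nonpos hg_lim
  have hintegrand : EqOn (fun S =>
      ((-(1 / S ^ 2)) + (1 / S) * (1 / S + 2 * β * φ₀' S)) * Real.exp (2 * β * φ₀ S) * S) g'
      (Ioi 0) := fun S (hS : 0 < S) => by
    simp only [g', g]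
    field_simp
    ring
  refine ⟨?_, neg_ne_zero.2 (Real.exp_ne_zero _)⟩
  rw [setIntegral_congr_fun measurableSet_Ioi hintegrand,
    integral_Ioi_of_hasDerivAt_of_tendsto (hg_cont 0 self_mem_Ici) hg_deriv hg'_int hg_lim,
    zero_sub]

/-- for `β < 0`, `κ > 0`, and `φ₀ ∈ C¹([0,∞))` with `φ₀(0) = c₀` and
`φ₀' → κ` at infinity, the pairing `⟨L_φ(1/S), e^{2βφ₀}⟩ = ∫₀^∞ [(1/S)' + (1/S)(1/S + 2βφ₀')]
e^{2βφ₀} S dS` equals `-e^{2βφ₀(0)}`, and in particular is nonzero. -/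
theorem stmt17 (β κ c₀ : ℝ) (hβ : β < 0) (hκ : 0 < κ)
    (φ₀ φ₀' : ℝ → ℝ)
    (hderiv : ∀ S ∈ Ioi (0:ℝ), HasDerivAt φ₀ (φ₀' S) S)
    (hφcont : ContinuousOn φ₀ (Ici 0))
    (hφ'cont : ContinuousOn φ₀' (Ici 0))
    (hlim : Tendsto φ₀' atTop (nhds κ))
    (h0 : φ₀ 0 = c₀) :
    (∫ S in Ioi (0:ℝ),
        ((-(1 / S ^ 2)) + (1 / S) * (1 / S + 2 * β * φ₀' S)) * Real.exp (2 * β * φ₀ S) * S)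
      = -Real.exp (2 * β * φ₀ 0) ∧
    -Real.exp (2 * β * φ₀ 0) ≠ 0 :=
  stmt17_general β κ hβ hκ φ₀ φ₀' hderiv hφcont hφ'cont hlim
end
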